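/- arXiv:2602.17717 — 5 statements merged into one kernel-verified Lean document; each statement's English description precedes it below -/
import Mathlib

section
/- Let a, b, c be integers with 0 < |a| ≤ |b| < |c|. Then ‖(3bc − a, b, c)‖ > ‖(a,b,c)‖ and ‖(a, 3ac − b, c)‖ > ‖(a,b,c)‖, i.e., replacing either of the two smaller entries of the triple by its Vieta image strictly increases the norm. -/
/-- The norm of an integer triple `(a,b,c)` is `|a| + |b| + |c|`. -/
def tripleNorm (a b c : ℤ) : ℤ := |a| + |b| + |c|

/-- The first step holds because `3|y||c| ≥ 3|c| > 2|x|`. -/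
theorem abs_lt_abs_three_mul_mul_sub {x y c : ℤ} (hy : y ≠ 0) (hc : c ≠ 0) (hxc : |x| ≤ |c|) :
    |x| < |3 * y * c - x| := by
  have hy1 : 1 ≤ |y| := Int.one_le_abs hy
  have hc0 : 0 < |c| := abs_pos.mpr hc
  calc |x| < 3 * |y| * |c| - |x| := by nlinarith
    _ = |3 * y * c| - |x| := by simp [abs_mul]
    _ ≤ |3 * y * c - x| := abs_sub_abs_le_abs_sub _ _

/-- Replacing either of the two smaller entries of a triple `(a,b,c)` with
`0 < |a| ≤ |b| < |c|` by its Vieta image strictly increases the norm. -/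
theorem vieta_norm_increase (a b c : ℤ)
    (h1 : 0 < |a|) (h2 : |a| ≤ |b|) (h3 : |b| < |c|) :
    tripleNorm (3 * b * c - a) b c > tripleNorm a b c ∧
    tripleNorm a (3 * a * c - b) c > tripleNorm a b c := by
  have ha : a ≠ 0 := abs_pos.mp h1
  have hb : b ≠ 0 := abs_pos.mp (h1.trans_le h2)
  have hc : c ≠ 0 := abs_pos.mp (h1.trans_le (h2.trans h3.le))
  have hva : |a| < |3 * b * c - a| := abs_lt_abs_three_mul_mul_sub hb hc (h2.trans h3.le)
  have hvb : |b| < |3 * a * c - b| := abs_lt_abs_three_mul_mul_sub ha hc h3.le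
  constructor <;> simp only [tripleNorm, gt_iff_lt] <;> linarith
end

section
/- Let a be a nonzero integer. The set of unordered triples reachable from {0,0,a} by finitely many Vieta moves is exactly {{0,0,a}, {0,0,−a}}. -/
/-- A Vieta move on an unordered triple (multiset of size 3) `{a,b,c}`
replaces one entry, e.g. `a`, by `3bc − a`. -/
def VietaMove (s t : Multiset ℤ) : Prop :=
  ∃ a b c : ℤ, s = {a, b, c} ∧ t = {3 * b * c - a, b, c}

/-- `t` is reachable from `s` if it is obtained by a finite (possibly empty)
sequence of Vieta moves. -/
def Reachable (s t : Multiset ℤ) : Prop :=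
  Relation.ReflTransGen VietaMove s t

lemma triple_eq (x y z p q r : ℤ) : ({x,y,z} : Multiset ℤ) = {p,q,r} ↔
    (x=p∧y=q∧z=r) ∨ (x=p∧y=r∧z=q) ∨ (x=q∧y=p∧z=r) ∨ (x=q∧y=r∧z=p) ∨
    (x=r∧y=p∧z=q) ∨ (x=r∧y=q∧z=p) := by
  simp only [Multiset.insert_eq_cons, Multiset.cons_eq_cons, Multiset.singleton_eq_cons_iff,
    Multiset.cons_zero]
  constructor
  · rintro h; aesop
  · rintro h
    by_cases hxp : x = p <;> by_cases hyq : y = q <;> by_cases hxq : x = q <;>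
      by_cases hyp : y = p <;> aesop

/-- For a nonzero integer `a`, the set of unordered triples reachable from
`{0,0,a}` is exactly `{{0,0,a}, {0,0,−a}}`. -/
theorem reachable_from_zero_zero_a (a : ℤ) (ha : a ≠ 0) :
    {t : Multiset ℤ | Reachable {0, 0, a} t} =
      {({0, 0, a} : Multiset ℤ), ({0, 0, -a} : Multiset ℤ)} := by
  ext t
  simp only [Set.mem_setOf_eq, Set.mem_insert_iff, Set.mem_singleton_iff]
  constructor
  · intro h
    induction h with
    | refl => left; rfl
    | tail _ hmv ih =>
      obtain ⟨x, y, z, hs, ht⟩ := hmv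
      rcases ih with h' | h' <;> rw [h', triple_eq] at hs <;>
        rcases hs with ⟨h1,h2,h3⟩|⟨h1,h2,h3⟩|⟨h1,h2,h3⟩|⟨h1,h2,h3⟩|⟨h1,h2,h3⟩|⟨h1,h2,h3⟩ <;>
        subst h1 h2 h3 <;> simp only [ht, triple_eq] <;> norm_num
  · rintro (h | h)
    · rw [h]; exact Relation.ReflTransGen.refl
    · rw [h]
      exact Relation.ReflTransGen.single
        ⟨a, 0, 0, by rw [triple_eq]; tauto, by rw [triple_eq]; norm_num⟩
end

section
/- Let a, b, c be integers with 0 < |a| < |b| < |c| and |3ab − c| ≥ |c|. Then each of the three triples obtained from (a,b,c) by a single Vieta move, namely (3bc − a, b, c), (a, 3ac − b, c), and (a, b, 3ab − c), has norm at least ‖(a,b,c)‖; that is, (a,b,c) is a base of its graph. -/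
lemma abs_le_abs_three_mul_mul_sub {x y z : ℤ} (hxy : |x| ≤ |y|) (hz : z ≠ 0) :
    |x| ≤ |3 * y * z - x| := by
  have hz1 : 1 ≤ |z| := Int.one_le_abs hz
  calc |x| ≤ 3 * |y| * |z| - |x| := by nlinarith [abs_nonneg x]
    _ = |3 * y * z| - |x| := by simp [abs_mul]
    _ ≤ |3 * y * z - x| := abs_sub_abs_le_abs_sub _ _

/-- If `0 < |a| < |b| < |c|` and `|3ab − c| ≥ |c|`, then each of the three
triples obtained from `(a,b,c)` by a single Vieta move has norm at least
`‖(a,b,c)‖`; that is, `(a,b,c)` is a base of its graph. -/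
theorem base_criterion (a b c : ℤ) (h1 : 0 < |a|) (h2 : |a| < |b|)
    (h3 : |b| < |c|) (h4 : |3 * a * b - c| ≥ |c|) :
    tripleNorm (3 * b * c - a) b c ≥ tripleNorm a b c ∧
    tripleNorm a (3 * a * c - b) c ≥ tripleNorm a b c ∧
    tripleNorm a b (3 * a * b - c) ≥ tripleNorm a b c := by
  have hc : c ≠ 0 := abs_pos.mp (h1.trans (h2.trans h3))
  have move_a : |a| ≤ |3 * b * c - a| := abs_le_abs_three_mul_mul_sub h2.le hc
  have move_b : |b| ≤ |3 * a * c - b| := by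
    rw [mul_right_comm]
    exact abs_le_abs_three_mul_mul_sub h3.le (abs_pos.mp h1)
  unfold tripleNorm
  refine ⟨?_, ?_, ?_⟩ <;> linarith
end

section
/- Let a, b, c be integers with 0 < |a| ≤ |b| < |c|. Then the set of unordered triples reachable from {a, b, c} by finitely many Vieta moves is infinite. -/
private def vstep (p : ℤ × ℤ × ℤ) : ℤ × ℤ × ℤ :=
  (p.2.1, p.2.2, 3 * p.2.1 * p.2.2 - p.1)

private def vms (p : ℤ × ℤ × ℤ) : Multiset ℤ := {p.1, p.2.1, p.2.2}

private def vInv (p : ℤ × ℤ × ℤ) : Prop :=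
  0 < |p.1| ∧ |p.1| ≤ |p.2.1| ∧ |p.2.1| < |p.2.2|

private lemma vstep_grow {p : ℤ × ℤ × ℤ} (h : vInv p) :
    |p.2.2| < |(vstep p).2.2| := by
  obtain ⟨a, b, c⟩ := p
  obtain ⟨h1, h2, h3⟩ := h
  simp only [vInv, vstep] at *
  have hb : 1 ≤ |b| := h1.trans_le h2
  have key : |c| < |3 * b * c| - |a| := by
    rw [abs_mul, abs_mul]
    have : |(3:ℤ)| = 3 := by norm_num
    rw [this]
    nlinarith [abs_nonneg a, abs_nonneg c]
  have := abs_sub_abs_le_abs_sub (3 * b * c) a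
  linarith

private lemma vInv_step {p : ℤ × ℤ × ℤ} (h : vInv p) : vInv (vstep p) := by
  have hg := vstep_grow h
  obtain ⟨a, b, c⟩ := p
  obtain ⟨h1, h2, h3⟩ := h
  exact ⟨h1.trans_le h2, h3.le, hg⟩

private lemma vInv_iter (p : ℤ × ℤ × ℤ) (h : vInv p) (n : ℕ) :
    vInv (vstep^[n] p) := by
  induction n with
  | zero => simpa using h
  | succ n ih => rw [Function.iterate_succ_apply']; exact vInv_step ih

private lemma vmove {p : ℤ × ℤ × ℤ} : VietaMove (vms p) (vms (vstep p)) := by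
  refine ⟨p.1, p.2.1, p.2.2, rfl, ?_⟩
  show (p.2.1 ::ₘ p.2.2 ::ₘ (3 * p.2.1 * p.2.2 - p.1) ::ₘ 0) =
    ((3 * p.2.1 * p.2.2 - p.1) ::ₘ p.2.1 ::ₘ p.2.2 ::ₘ 0)
  rw [Multiset.cons_swap p.2.2, Multiset.cons_swap p.2.1]

private def absSum (s : Multiset ℤ) : ℤ := (s.map fun x => |x|).sum

private lemma absSum_vms (p : ℤ × ℤ × ℤ) :
    absSum (vms p) = |p.1| + |p.2.1| + |p.2.2| := by
  simp [absSum, vms]; ring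

/-- If `0 < |a| ≤ |b| < |c|`, the set of unordered triples reachable from
`{a,b,c}` by finitely many Vieta moves is infinite. -/
theorem reachable_set_infinite (a b c : ℤ)
    (h1 : 0 < |a|) (h2 : |a| ≤ |b|) (h3 : |b| < |c|) :
    {t : Multiset ℤ | Reachable {a, b, c} t}.Infinite := by
  set p₀ : ℤ × ℤ × ℤ := (a, b, c) with hp₀
  have hInv : vInv p₀ := ⟨h1, h2, h3⟩
  have hmono : StrictMono (fun n => absSum (vms (vstep^[n] p₀))) := by
    apply strictMono_nat_of_lt_succ
    intro n
    have hI := vInv_iter p₀ hInv n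
    have hg := vstep_grow hI
    obtain ⟨hi1, hi2, hi3⟩ := hI
    rw [Function.iterate_succ_apply', absSum_vms, absSum_vms]
    simp only [vstep] at hg ⊢
    linarith
  refine Set.infinite_of_injective_forall_mem
    (f := fun n => vms (vstep^[n] p₀)) ?_ ?_
  · intro m n hmn
    exact hmono.injective (by simp only at hmn ⊢; rw [hmn])
  · intro n
    simp only [Set.mem_setOf_eq]
    have : ({a, b, c} : Multiset ℤ) = vms p₀ := rfl
    rw [this]
    induction n with
    | zero => exact Relation.ReflTransGen.refl
    | succ n ih =>
        rw [Function.iterate_succ_apply']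
        exact Relation.ReflTransGen.tail ih vmove
end

section
/- Let a be a nonzero integer. Then the chain (−3a²−a, a, −a) ↔ (a, a, −a) ↔ (a, a, 3a²+a) ↔ (9a³+3a²−a, a, 3a²+a) holds, where each consecutive pair is linked by a single Vieta move; moreover |a| < |3a² + a| < |3a(3a²+a) − a|, so the two end triples each satisfy the hypotheses 0 < |x| ≤ |y| < |z| of the norm-increase lemma after ordering by absolute value. -/
theorem vietaMove_of_add_eq {a a' b c : ℤ} (h : a + a' = 3 * b * c) :
    VietaMove {a, b, c} {a', b, c} :=
  ⟨a, b, c, rfl, by rw [show a' = 3 * b * c - a by omega]⟩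

theorem vietaMove_of_add_eq_right {a b c c' : ℤ} (h : c + c' = 3 * a * b) :
    VietaMove {a, b, c} {a, b, c'} := by
  have rotate : ∀ x y z : ℤ, ({x, y, z} : Multiset ℤ) = {z, x, y} := fun x y z => by
    simp only [Multiset.insert_eq_cons, Multiset.cons_swap _ z, Multiset.pair_comm y z]
  rw [rotate a, rotate a]
  exact vietaMove_of_add_eq h

theorem abs_lt_abs_three_mul_sq_add {a : ℤ} (ha : a ≠ 0) : |a| < |3 * a ^ 2 + a| := by
  have h : 2 ≤ |3 * a + 1| := by
    rcases lt_or_gt_of_ne ha with h | h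
    · rw [abs_of_neg (by omega)]; omega
    · rw [abs_of_pos (by omega)]; omega
  calc |a| < 2 * |a| := by linarith [abs_pos.mpr ha]
    _ ≤ |3 * a + 1| * |a| := by gcongr
    _ = |3 * a ^ 2 + a| := by rw [← abs_mul]; ring_nf

theorem abs_lt_abs_three_mul_mul_sub_s18 {a b c : ℤ} (hb : b ≠ 0) (hac : |a| < |c|) :
    |c| < |3 * b * c - a| :=
  calc |c| ≤ 3 * |c| - 2 * |c| := by linarith
    _ < 3 * |c| - |a| := by linarith [abs_nonneg a]
    _ ≤ 3 * |b| * |c| - |a| := by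
        gcongr
        exact le_mul_of_one_le_right (by norm_num) (Int.one_le_abs hb)
    _ ≤ |3 * b * c - a| := by
        rw [show 3 * |b| * |c| = |3 * b * c| by simp [abs_mul]]
        exact abs_sub_abs_le_abs_sub _ _

/-- For a nonzero integer `a`, the chain
`(−3a²−a, a, −a) ↔ (a, a, −a) ↔ (a, a, 3a²+a) ↔ (9a³+3a²−a, a, 3a²+a)` holds,
each consecutive pair being linked by a single Vieta move; moreover
`|a| < |3a² + a| < |3a(3a²+a) − a|`. -/
theorem class_six_special_chain (a : ℤ) (ha : a ≠ 0) :
    VietaMove {-(3 * a ^ 2) - a, a, -a} {a, a, -a} ∧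
    VietaMove {a, a, -a} {a, a, 3 * a ^ 2 + a} ∧
    VietaMove {a, a, 3 * a ^ 2 + a} {9 * a ^ 3 + 3 * a ^ 2 - a, a, 3 * a ^ 2 + a} ∧
    |a| < |3 * a ^ 2 + a| ∧
    |3 * a ^ 2 + a| < |3 * a * (3 * a ^ 2 + a) - a| := by
  have hsmall := abs_lt_abs_three_mul_sq_add ha
  exact ⟨vietaMove_of_add_eq (by ring), vietaMove_of_add_eq_right (by ring),
    vietaMove_of_add_eq (by ring), hsmall, abs_lt_abs_three_mul_mul_sub_s18 ha hsmall⟩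
end
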